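/- arXiv:1512.05303 — 4 statements merged into one kernel-verified Lean document; each statement's English description precedes it below -/
import Mathlib

section
/- There is a constant C > 0 such that for every natural number j ≤ 2k−1, every ε with 0 < ε ≤ 1, and every x ∈ ℝ, one has |iteratedDeriv j h_ε x − iteratedDeriv j (fun t ↦ t^{2k}) x| ≤ C·ε^{2k−j}. In particular, on the interval [−ε, ε] both the (2k−1)-st derivative of h_ε and the function (2k)!·x (the (2k−1)-st derivative of x^{2k}) are bounded by a constant multiple of ε. -/
/-- There is a constant `C > 0` such that for every `j ≤ 2k-1`, every
`ε` with `0 < ε ≤ 1` and every `x : ℝ`, the `j`-th derivatives of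
`h_ε x = ε^(2k) * (1/deriv f (x/ε))` and of `x ↦ x^(2k)` differ by at most `C * ε^(2k-j)`. -/
theorem statement4 (k : ℕ) (hk : 1 ≤ k) (f : ℝ → ℝ)
    (hsmooth : ContDiff ℝ (⊤ : ℕ∞) f)
    (hodd : ∀ x : ℝ, f (-x) = -f x)
    (hderivpos : ∀ x ∈ Set.Icc (-1 : ℝ) 1, 0 < deriv f x)
    (hplus : ∀ x : ℝ, 1 < x → f x = -1 / ((2 * (k : ℝ) - 1) * x ^ (2 * k - 1)) + 2)
    (hminus : ∀ x : ℝ, x < -1 → f x = -1 / ((2 * (k : ℝ) - 1) * x ^ (2 * k - 1)) - 2) :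
    ∃ C : ℝ, 0 < C ∧ ∀ j : ℕ, j ≤ 2 * k - 1 → ∀ ε : ℝ, 0 < ε → ε ≤ 1 → ∀ x : ℝ,
      |iteratedDeriv j (fun t : ℝ => ε ^ (2 * k) * (1 / deriv f (t / ε))) x -
        iteratedDeriv j (fun t : ℝ => t ^ (2 * k)) x| ≤ C * ε ^ (2 * k - j) := by
  have hc : ((2 * k - 1 : ℕ) : ℝ) = 2 * (k : ℝ) - 1 := by
    have : 1 ≤ 2 * k := by omega
    push_cast [Nat.cast_sub this]; ring
  have hcpos : (0 : ℝ) < 2 * (k : ℝ) - 1 := by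
    have : (1 : ℝ) ≤ (k : ℝ) := by exact_mod_cast hk
    linarith
  -- derivative of the explicit formula
  have hform : ∀ x : ℝ, x ≠ 0 →
      HasDerivAt (fun y : ℝ => -1 / ((2 * (k : ℝ) - 1) * y ^ (2 * k - 1))) ((x ^ (2 * k))⁻¹) x := by
    intro x hx0
    have h1 : HasDerivAt (fun y : ℝ => y ^ (-(2 * k - 1 : ℕ) : ℤ))
        (((-(2 * k - 1 : ℕ) : ℤ) : ℝ) * x ^ ((-(2 * k - 1 : ℕ) : ℤ) - 1)) x :=
      hasDerivAt_zpow _ _ (Or.inl hx0)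
    have h2 := h1.const_mul (-(2 * (k : ℝ) - 1)⁻¹)
    have hfun : (fun y : ℝ => -(2 * (k : ℝ) - 1)⁻¹ * y ^ (-(2 * k - 1 : ℕ) : ℤ)) =
        fun y : ℝ => -1 / ((2 * (k : ℝ) - 1) * y ^ (2 * k - 1)) := by
      funext y
      rw [zpow_neg, zpow_natCast]
      rw [div_eq_mul_inv, mul_inv]
      ring
    rw [hfun] at h2
    convert h2 using 1
    · rfl
    · rfl
    have hz : ((-(2 * k - 1 : ℕ) : ℤ) - 1) = (-(2 * k : ℕ) : ℤ) := by
      push_cast [Nat.cast_sub (by omega : 1 ≤ 2 * k)]; ring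
    rw [hz, zpow_neg, zpow_natCast]
    push_cast [hc]
    field_simp
  -- value of deriv f outside [-1,1]
  have hA : ∀ x : ℝ, 1 < |x| → deriv f x = (x ^ (2 * k))⁻¹ := by
    intro x hx
    have hx0 : x ≠ 0 := by intro h; rw [h, abs_zero] at hx; linarith
    rcases lt_abs.mp hx with h1 | h1
    · -- x > 1
      have hev : f =ᶠ[nhds x]
          (fun y : ℝ => -1 / ((2 * (k : ℝ) - 1) * y ^ (2 * k - 1)) + 2) := by
        filter_upwards [IsOpen.mem_nhds isOpen_Ioi (Set.mem_Ioi.mpr h1)] with y hy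
        exact hplus y hy
      rw [hev.deriv_eq]
      exact (((hform x hx0).add_const 2).deriv)
    · -- x < -1
      have h1' : x < -1 := by linarith
      have hev : f =ᶠ[nhds x]
          (fun y : ℝ => -1 / ((2 * (k : ℝ) - 1) * y ^ (2 * k - 1)) - 2) := by
        filter_upwards [IsOpen.mem_nhds isOpen_Iio (Set.mem_Iio.mpr h1')] with y hy
        exact hminus y hy
      rw [hev.deriv_eq]
      exact (((hform x hx0).sub_const 2).deriv)
  -- positivity of deriv f everywhere
  have hjle : ∀ j : ℕ, ((j : WithTop ℕ∞)) ≤ (((⊤ : ℕ∞)) : WithTop ℕ∞) := fun j => by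
    exact_mod_cast le_top
  have hpos : ∀ x : ℝ, 0 < deriv f x := by
    intro x
    by_cases hx : |x| ≤ 1
    · exact hderivpos x (Set.mem_Icc.mpr (abs_le.mp hx))
    · push_neg at hx
      rw [hA x hx]
      have hx0 : x ≠ 0 := by intro h; rw [h, abs_zero] at hx; linarith
      have h2 : (0:ℝ) < x ^ 2 := by rcases hx0.lt_or_gt with h | h <;> nlinarith
      have : 0 < x ^ (2 * k) := by
        rw [pow_mul]
        exact pow_pos h2 k
      positivity
  -- smoothness of g = (deriv f)⁻¹
  have hfi : ContDiff ℝ (((⊤ : ℕ∞) : WithTop ℕ∞)) f := hsmooth.of_le (by simp)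
  have hderivsmooth : ContDiff ℝ (((⊤ : ℕ∞) : WithTop ℕ∞)) (deriv f) :=
    (contDiff_infty_iff_deriv.mp hfi).2
  set d : ℝ → ℝ := fun x => (deriv f x)⁻¹ - x ^ (2 * k) with hd_def
  have hdsmooth : ContDiff ℝ (((⊤ : ℕ∞) : WithTop ℕ∞)) d :=
    (hderivsmooth.inv fun x => (hpos x).ne').sub (contDiff_id.pow _)
  have hdzero : ∀ x : ℝ, 1 < |x| → d x = 0 := by
    intro x hx
    simp only [hd_def, hA x hx, inv_inv, sub_self]
  have hDzero : ∀ (j : ℕ) (x : ℝ), 1 < |x| → iteratedDeriv j d x = 0 := by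
    intro j x hx
    have hopen : IsOpen {y : ℝ | 1 < |y|} := isOpen_lt continuous_const continuous_abs
    have hev : d =ᶠ[nhds x] (fun _ => (0 : ℝ)) := by
      filter_upwards [hopen.mem_nhds hx] with y hy
      exact hdzero y hy
    rw [hev.iteratedDeriv_eq]
    simp [iteratedDeriv]
  -- bounds on iterated derivatives of d
  have hbound : ∀ j : ℕ, ∃ M : ℝ, ∀ x : ℝ, |iteratedDeriv j d x| ≤ M := by
    intro j
    have hcont : Continuous (iteratedDeriv j d) :=
      hdsmooth.continuous_iteratedDeriv j (hjle j)
    have hcs : HasCompactSupport (iteratedDeriv j d) := by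
      apply HasCompactSupport.intro (isCompact_Icc (a := (-1 : ℝ)) (b := 1))
      intro x hx
      apply hDzero
      simp only [Set.mem_Icc, not_and_or, not_le] at hx
      rcases hx with h | h
      · exact lt_abs.mpr (Or.inr (by linarith))
      · exact lt_abs.mpr (Or.inl h)
    obtain ⟨M, hM⟩ := hcs.exists_bound_of_continuous hcont
    exact ⟨M, fun x => by simpa [Real.norm_eq_abs] using hM x⟩
  choose M hM using hbound
  refine ⟨1 + ∑ i ∈ Finset.range (2 * k), max (M i) 0, ?_, ?_⟩
  · have : (0 : ℝ) ≤ ∑ i ∈ Finset.range (2 * k), max (M i) 0 :=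
      Finset.sum_nonneg fun i _ => le_max_right _ _
    linarith
  intro j hj ε hε hε1 x
  have hjlt : j < 2 * k := by omega
  have hε0 : ε ≠ 0 := hε.ne'
  -- rewrite the function
  have e1 : (fun t : ℝ => ε ^ (2 * k) * (1 / deriv f (t / ε))) =
      (fun t : ℝ => t ^ (2 * k)) + (fun t : ℝ => ε ^ (2 * k) * d (ε⁻¹ * t)) := by
    funext t
    simp only [hd_def, Pi.add_apply, one_div, div_eq_inv_mul]
    rw [mul_sub]
    have : ε ^ (2 * k) * (ε⁻¹ * t) ^ (2 * k) = t ^ (2 * k) := by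
      rw [mul_pow, ← mul_assoc, ← mul_pow, mul_inv_cancel₀ hε0, one_pow, one_mul]
    rw [this]
    ring
  rw [e1]
  have hcd2 : ContDiff ℝ (((⊤ : ℕ∞) : WithTop ℕ∞)) (fun t : ℝ => ε ^ (2 * k) * d (ε⁻¹ * t)) :=
    ContDiff.mul contDiff_const (hdsmooth.comp (ContDiff.mul contDiff_const contDiff_id))
  have hsplit : iteratedDeriv j
      ((fun t : ℝ => t ^ (2 * k)) + (fun t : ℝ => ε ^ (2 * k) * d (ε⁻¹ * t))) x =
      iteratedDeriv j (fun t : ℝ => t ^ (2 * k)) x +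
      iteratedDeriv j (fun t : ℝ => ε ^ (2 * k) * d (ε⁻¹ * t)) x := by
    simp only [← iteratedDerivWithin_univ]
    exact iteratedDerivWithin_add (Set.mem_univ x) uniqueDiffOn_univ
      (((contDiff_id.pow (2 * k)).contDiffOn.of_le (hjle j)).contDiffWithinAt (Set.mem_univ x))
        ((hcd2.contDiffOn.of_le (hjle j)).contDiffWithinAt (Set.mem_univ x))
  rw [hsplit, add_sub_cancel_left]
  have hpull : iteratedDeriv j (fun t : ℝ => ε ^ (2 * k) * d (ε⁻¹ * t)) x =
      ε ^ (2 * k) * iteratedDeriv j (fun t : ℝ => d (ε⁻¹ * t)) x := by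
    simp only [← iteratedDerivWithin_univ]
    exact iteratedDerivWithin_const_mul (Set.mem_univ x) uniqueDiffOn_univ _
      (((hdsmooth.comp (ContDiff.mul contDiff_const contDiff_id)).contDiffOn.of_le (hjle j)).contDiffWithinAt (Set.mem_univ x))
  have hcomp : iteratedDeriv j (fun t : ℝ => d (ε⁻¹ * t)) x =
      (ε⁻¹) ^ j * iteratedDeriv j d (ε⁻¹ * x) := by
    rw [iteratedDeriv_comp_const_mul (hdsmooth.of_le (hjle j)) (ε⁻¹)]
  rw [hpull, hcomp]
  have hMj : M j ≤ 1 + ∑ i ∈ Finset.range (2 * k), max (M i) 0 := by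
    have h1 : max (M j) 0 ≤ ∑ i ∈ Finset.range (2 * k), max (M i) 0 :=
      Finset.single_le_sum (fun i _ => le_max_right (M i) 0) (Finset.mem_range.mpr hjlt)
    calc M j ≤ max (M j) 0 := le_max_left _ _
      _ ≤ ∑ i ∈ Finset.range (2 * k), max (M i) 0 := h1
      _ ≤ 1 + ∑ i ∈ Finset.range (2 * k), max (M i) 0 := by linarith
  have hpow : ε ^ (2 * k) * (ε⁻¹) ^ j = ε ^ (2 * k - j) := by
    have h : (2 * k - j) + j = 2 * k := Nat.sub_add_cancel hjlt.le
    calc ε ^ (2 * k) * (ε⁻¹) ^ j = ε ^ ((2 * k - j) + j) * (ε⁻¹) ^ j := by rw [h]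
      _ = ε ^ (2 * k - j) := by
          rw [pow_add, mul_assoc, ← mul_pow, mul_inv_cancel₀ hε0, one_pow, mul_one]
  calc |ε ^ (2 * k) * ((ε⁻¹) ^ j * iteratedDeriv j d (ε⁻¹ * x))|
      = ε ^ (2 * k) * (ε⁻¹) ^ j * |iteratedDeriv j d (ε⁻¹ * x)| := by
        rw [abs_mul, abs_mul, ← mul_assoc, abs_of_pos (pow_pos hε _),
          abs_of_pos (pow_pos (inv_pos.mpr hε) _)]
    _ = ε ^ (2 * k - j) * |iteratedDeriv j d (ε⁻¹ * x)| := by rw [hpow]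
    _ ≤ ε ^ (2 * k - j) * M j := by
        apply mul_le_mul_of_nonneg_left (hM j _) (le_of_lt (pow_pos hε _))
    _ = M j * ε ^ (2 * k - j) := mul_comm _ _
    _ ≤ (1 + ∑ i ∈ Finset.range (2 * k), max (M i) 0) * ε ^ (2 * k - j) :=
        mul_le_mul_of_nonneg_right hMj (pow_pos hε _).le
end

section
/- For every ε > 0 and every x ∈ ℝ with |x| ≥ ε one has deriv f_ε x = 1/x^{2k}. (This expresses that the desingularized form ω_ε, obtained by replacing dx/x^{2k} by df_ε, coincides with the b^{2k}-symplectic form ω outside the ε-neighborhood of the critical hypersurface.) -/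
open Filter Topology

private lemma formula_hasDerivAt (k : ℕ) (hk : 1 ≤ k) (c : ℝ) (y : ℝ) (hy : y ≠ 0) :
    HasDerivAt (fun t : ℝ => -1 / ((2 * (k : ℝ) - 1) * t ^ (2 * k - 1)) + c)
      ((y ^ (2 * k))⁻¹) y := by
  have hn : (1 : ℕ) ≤ 2 * k := by omega
  have hk1 : (1 : ℝ) ≤ (k : ℝ) := by exact_mod_cast hk
  have hne : (2 * (k : ℝ) - 1) ≠ 0 := by nlinarith
  have key : ∀ t : ℝ, -1 / ((2 * (k : ℝ) - 1) * t ^ (2 * k - 1)) + c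
      = -(2 * (k : ℝ) - 1)⁻¹ * t ^ (-(2 * (k : ℤ) - 1)) + c := by
    intro t
    have ht : t ^ (-(2 * (k : ℤ) - 1)) = (t ^ (2 * k - 1 : ℕ))⁻¹ := by
      rw [zpow_neg]
      congr 1
      rw [← zpow_natCast]
      congr 1
      push_cast [Nat.cast_sub hn]
      ring
    rw [ht, div_eq_mul_inv, mul_inv]
    ring
  simp only [key]
  have hz := ((hasDerivAt_zpow (-(2 * (k : ℤ) - 1)) y (Or.inl hy)).const_mul
      (-(2 * (k : ℝ) - 1)⁻¹)).add_const c
  refine hz.congr_deriv (Eq.symm ?_)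
  have he : (-(2 * (k : ℤ) - 1) - 1) = -(2 * (k : ℤ)) := by ring
  rw [he, zpow_neg, show ((2 * (k : ℤ))) = ((2 * k : ℕ) : ℤ) by push_cast; ring,
    zpow_natCast]
  push_cast
  field_simp

private lemma deriv_f_eq (k : ℕ) (hk : 1 ≤ k) (f : ℝ → ℝ)
    (hsmooth : ContDiff ℝ (⊤ : ℕ∞) f)
    (hplus : ∀ x : ℝ, 1 < x → f x = -1 / ((2 * (k : ℝ) - 1) * x ^ (2 * k - 1)) + 2)
    (hminus : ∀ x : ℝ, x < -1 → f x = -1 / ((2 * (k : ℝ) - 1) * x ^ (2 * k - 1)) - 2) :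
    ∀ y : ℝ, 1 ≤ |y| → deriv f y = (y ^ (2 * k))⁻¹ := by
  have hcont : Continuous (deriv f) := hsmooth.continuous_deriv (by simp)
  have hgt : ∀ y : ℝ, 1 < y → deriv f y = (y ^ (2 * k))⁻¹ := by
    intro y hy
    have heq : f =ᶠ[𝓝 y] fun t => -1 / ((2 * (k : ℝ) - 1) * t ^ (2 * k - 1)) + 2 := by
      filter_upwards [Ioi_mem_nhds hy] with t ht using hplus t ht
    rw [heq.deriv_eq, (formula_hasDerivAt k hk 2 y (by linarith)).deriv]
  have hlt : ∀ y : ℝ, y < -1 → deriv f y = (y ^ (2 * k))⁻¹ := by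
    intro y hy
    have heq : f =ᶠ[𝓝 y] fun t => -1 / ((2 * (k : ℝ) - 1) * t ^ (2 * k - 1)) + (-2) := by
      filter_upwards [Iio_mem_nhds hy] with t ht
      rw [hminus t ht]; ring
    rw [heq.deriv_eq, (formula_hasDerivAt k hk (-2) y (by linarith)).deriv]
  have hone : deriv f 1 = 1 := by
    have h1 : Tendsto (deriv f) (𝓝[>] (1:ℝ)) (𝓝 (deriv f 1)) :=
      (hcont.tendsto 1).mono_left nhdsWithin_le_nhds
    have h2 : Tendsto (deriv f) (𝓝[>] (1:ℝ)) (𝓝 1) := by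
      have h3 : Tendsto (fun y : ℝ => (y ^ (2 * k))⁻¹) (𝓝[>] (1:ℝ)) (𝓝 1) := by
        have : ContinuousAt (fun y : ℝ => (y ^ (2 * k))⁻¹) 1 :=
          ((continuous_pow (2 * k)).continuousAt).inv₀ (by norm_num)
        simpa using this.continuousWithinAt.tendsto
      refine h3.congr' ?_
      filter_upwards [self_mem_nhdsWithin] with t ht using (hgt t ht).symm
    exact tendsto_nhds_unique h1 h2
  have hmone : deriv f (-1) = 1 := by
    have h1 : Tendsto (deriv f) (𝓝[<] (-1:ℝ)) (𝓝 (deriv f (-1))) :=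
      (hcont.tendsto (-1)).mono_left nhdsWithin_le_nhds
    have h2 : Tendsto (deriv f) (𝓝[<] (-1:ℝ)) (𝓝 1) := by
      have h3 : Tendsto (fun y : ℝ => (y ^ (2 * k))⁻¹) (𝓝[<] (-1:ℝ)) (𝓝 1) := by
        have hc : ContinuousAt (fun y : ℝ => (y ^ (2 * k))⁻¹) (-1) := by
          refine ((continuous_pow (2 * k)).continuousAt).inv₀ ?_
          simp [pow_mul]
        have h4 : Tendsto (fun y : ℝ => (y ^ (2 * k))⁻¹) (𝓝[<] (-1:ℝ))
            (𝓝 (((-1:ℝ) ^ (2 * k))⁻¹)) := hc.tendsto.mono_left nhdsWithin_le_nhds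
        simpa [pow_mul] using h4
      refine h3.congr' ?_
      filter_upwards [self_mem_nhdsWithin] with t ht using (hlt t ht).symm
    exact tendsto_nhds_unique h1 h2
  intro y hy
  rcases le_abs.mp hy with h | h
  · rcases eq_or_lt_of_le h with rfl | h
    · simpa [pow_mul] using hone
    · exact hgt y h
  · have h' : y ≤ -1 := by linarith
    rcases eq_or_lt_of_le h' with rfl | h'
    · simpa [pow_mul] using hmone
    · exact hlt y h'

/-- For every `ε > 0` and every `x` with `|x| ≥ ε` one has
`deriv f_ε x = 1/x^(2k)`, where `f_ε x = ε^(-(2k-1)) * f (x/ε)`.  (The desingularized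
form `ω_ε`, obtained by replacing `dx/x^(2k)` by `df_ε`, coincides with the
`b^(2k)`-symplectic form `ω` outside the `ε`-neighborhood of the critical hypersurface.) -/
theorem statement6 (k : ℕ) (hk : 1 ≤ k) (f : ℝ → ℝ)
    (hsmooth : ContDiff ℝ (⊤ : ℕ∞) f)
    (hodd : ∀ x : ℝ, f (-x) = -f x)
    (hderivpos : ∀ x ∈ Set.Icc (-1 : ℝ) 1, 0 < deriv f x)
    (hplus : ∀ x : ℝ, 1 < x → f x = -1 / ((2 * (k : ℝ) - 1) * x ^ (2 * k - 1)) + 2)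
    (hminus : ∀ x : ℝ, x < -1 → f x = -1 / ((2 * (k : ℝ) - 1) * x ^ (2 * k - 1)) - 2) :
    ∀ ε : ℝ, 0 < ε → ∀ x : ℝ, ε ≤ |x| →
      deriv (fun t : ℝ => f (t / ε) / ε ^ (2 * k - 1)) x = 1 / x ^ (2 * k) := by
  intro ε hε x hx
  have hx0 : x ≠ 0 := by
    intro h; rw [h, abs_zero] at hx; linarith
  have hε0 : ε ≠ 0 := hε.ne'
  have hy : 1 ≤ |x / ε| := by
    rw [abs_div, abs_of_pos hε, le_div_iff₀ hε, one_mul]; exact hx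
  have hd : HasDerivAt f (((x / ε) ^ (2 * k))⁻¹) (x / ε) := by
    have h := ((hsmooth.differentiable (by simp)) (x / ε)).hasDerivAt
    rwa [deriv_f_eq k hk f hsmooth hplus hminus (x / ε) hy] at h
  have hlin : HasDerivAt (fun t : ℝ => t / ε) (1 / ε) x := by
    simpa using (hasDerivAt_id x).div_const ε
  have h2 : HasDerivAt (fun t => f (t / ε)) (((x / ε) ^ (2 * k))⁻¹ * (1 / ε)) x :=
    hd.comp x hlin
  have h3 := h2.div_const (ε ^ (2 * k - 1))
  rw [h3.deriv]
  have hpow : ε ^ (2 * k) = ε ^ (2 * k - 1) * ε := by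
    rw [← pow_succ]; congr 1; omega
  rw [div_pow]
  field_simp
  rw [hpow]; ring
end

section
/- For every even natural number i there exists a constant c > 0, independent of ε, such that for all ε > 0, ∫_{−ε}^{ε} (deriv f_ε x)·x^i dx = c·ε^{i−(2k−1)}; and for every odd natural number i and every ε > 0, ∫_{−ε}^{ε} (deriv f_ε x)·x^i dx = 0. -/
/-- For every even `i` there is a constant `c > 0`, independent of
`ε`, with `∫ x in -ε..ε, (deriv f_ε x) * x^i = c * ε^(i-(2k-1))` for all `ε > 0`; and
for every odd `i` and every `ε > 0` this integral vanishes.  Here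
`f_ε x = ε^(-(2k-1)) * f (x/ε)`. -/
theorem statement10 (k : ℕ) (hk : 1 ≤ k) (f : ℝ → ℝ)
    (hsmooth : ContDiff ℝ (⊤ : ℕ∞) f)
    (hodd : ∀ x : ℝ, f (-x) = -f x)
    (hderivpos : ∀ x ∈ Set.Icc (-1 : ℝ) 1, 0 < deriv f x)
    (hplus : ∀ x : ℝ, 1 < x → f x = -1 / ((2 * (k : ℝ) - 1) * x ^ (2 * k - 1)) + 2)
    (hminus : ∀ x : ℝ, x < -1 → f x = -1 / ((2 * (k : ℝ) - 1) * x ^ (2 * k - 1)) - 2) :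
    (∀ i : ℕ, Even i → ∃ c : ℝ, 0 < c ∧ ∀ ε : ℝ, 0 < ε →
      (∫ x in (-ε)..ε, deriv (fun t : ℝ => f (t / ε) / ε ^ (2 * k - 1)) x * x ^ i) =
        c * ε ^ ((i : ℤ) - (2 * (k : ℤ) - 1))) ∧
    (∀ i : ℕ, Odd i → ∀ ε : ℝ, 0 < ε →
      (∫ x in (-ε)..ε, deriv (fun t : ℝ => f (t / ε) / ε ^ (2 * k - 1)) x * x ^ i) = 0) := by
  have hdf : Differentiable ℝ f := hsmooth.differentiable (by simp)
  have hcd : Continuous (deriv f) := hsmooth.continuous_deriv (by simp)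
  -- derivative computation
  have hderiv_eq : ∀ ε : ℝ, 0 < ε → ∀ x : ℝ,
      deriv (fun t : ℝ => f (t / ε) / ε ^ (2 * k - 1)) x
        = deriv f (x / ε) * ε⁻¹ / ε ^ (2 * k - 1) := by
    intro ε hε x
    have h1 : HasDerivAt (fun t : ℝ => f (t / ε)) (deriv f (x / ε) * ε⁻¹) x := by
      have h2 : HasDerivAt (fun t : ℝ => t / ε) (1 / ε) x := (hasDerivAt_id x).div_const ε
      have := ((hdf (x / ε)).hasDerivAt).comp x h2
      simpa [Function.comp_def, one_div, mul_comm] using this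
    exact (h1.div_const _).deriv
  -- deriv f is even
  have heven : ∀ x : ℝ, deriv f (-x) = deriv f x := by
    intro x
    have h1 : deriv (fun y : ℝ => f (-y)) x = -deriv f (-x) := by
      have := ((hdf (-x)).hasDerivAt).comp x ((hasDerivAt_id x).neg)
      simpa [Function.comp_def] using this.deriv
    have h2 : deriv (fun y : ℝ => f (-y)) x = -deriv f x := by
      have : (fun y : ℝ => f (-y)) = fun y => -f y := funext hodd
      rw [this]; exact deriv.neg
    have := h1.symm.trans h2
    linarith
  constructor
  · -- even case
    intro i hi
    set g : ℝ → ℝ := fun u => deriv f u * u ^ i with hg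
    have hgc : Continuous g := hcd.mul (continuous_pow i)
    refine ⟨∫ u in (-1:ℝ)..1, g u, ?_, ?_⟩
    · -- positivity
      have hsplit : (∫ u in (-1:ℝ)..1, g u)
          = (∫ u in (-1:ℝ)..(1/2), g u) + ∫ u in (1/2:ℝ)..1, g u := by
        rw [intervalIntegral.integral_add_adjacent_intervals
          (hgc.intervalIntegrable _ _) (hgc.intervalIntegrable _ _)]
      have h1 : 0 ≤ ∫ u in (-1:ℝ)..(1/2), g u := by
        apply intervalIntegral.integral_nonneg (by norm_num)
        intro u hu
        have hu' : u ∈ Set.Icc (-1:ℝ) 1 := ⟨hu.1, by linarith [hu.2]⟩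
        exact mul_nonneg (hderivpos u hu').le (hi.pow_nonneg u)
      have h2 : 0 < ∫ u in (1/2:ℝ)..1, g u := by
        apply intervalIntegral.intervalIntegral_pos_of_pos_on
          (hgc.intervalIntegrable _ _) ?_ (by norm_num)
        intro u hu
        have hu' : u ∈ Set.Icc (-1:ℝ) 1 := ⟨by linarith [hu.1], hu.2.le⟩
        exact mul_pos (hderivpos u hu') (pow_pos (by linarith [hu.1]) i)
      rw [hsplit]; linarith
    · intro ε hε
      have hεne : ε ≠ 0 := ne_of_gt hε
      have hrw : (∫ x in (-ε)..ε, deriv (fun t : ℝ => f (t / ε) / ε ^ (2 * k - 1)) x * x ^ i)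
          = (ε⁻¹ / ε ^ (2 * k - 1)) * ∫ x in (-ε)..ε, deriv f (x / ε) * x ^ i := by
        rw [← intervalIntegral.integral_const_mul]
        apply intervalIntegral.integral_congr
        intro x _
        simp only [hderiv_eq ε hε x]
        ring
      have hsub : (∫ x in (-ε)..ε, deriv f (x / ε) * x ^ i)
          = ε • ∫ u in (-ε/ε)..(ε/ε), deriv f u * (ε * u) ^ i := by
        rw [← intervalIntegral.integral_comp_div (fun u => deriv f u * (ε * u) ^ i) hεne]
        apply intervalIntegral.integral_congr
        intro x _
        have : ε * (x / ε) = x := by field_simp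
        simp only [this]
      have h1 : -ε / ε = -1 := by field_simp
      have h2 : ε / ε = 1 := by field_simp
      rw [hrw, hsub, h1, h2]
      have h3 : (∫ u in (-1:ℝ)..1, deriv f u * (ε * u) ^ i)
          = ε ^ i * ∫ u in (-1:ℝ)..1, g u := by
        rw [← intervalIntegral.integral_const_mul]
        apply intervalIntegral.integral_congr
        intro u _
        simp only [hg, mul_pow]; ring
      rw [h3, smul_eq_mul]
      have hcast : (i : ℤ) - (2 * (k : ℤ) - 1) = (i : ℤ) - ((2 * k - 1 : ℕ) : ℤ) := by
        have : ((2 * k - 1 : ℕ) : ℤ) = 2 * (k : ℤ) - 1 := by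
          push_cast [Nat.cast_sub (by omega : 1 ≤ 2 * k)]; ring
        omega
      rw [hcast, zpow_sub₀ hεne, zpow_natCast, zpow_natCast]
      field_simp
  · -- odd case
    intro i hi ε hε
    set h : ℝ → ℝ := fun x => deriv (fun t : ℝ => f (t / ε) / ε ^ (2 * k - 1)) x * x ^ i with hh
    have hoddh : ∀ x : ℝ, h (-x) = -h x := by
      intro x
      simp only [hh, hderiv_eq ε hε, neg_div, heven, hi.neg_pow]
      ring
    have key : (∫ x in (-ε)..ε, h (-x)) = ∫ x in (-ε)..ε, h x := by
      simpa using intervalIntegral.integral_comp_neg (a := -ε) (b := ε) h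
    have key2 : (∫ x in (-ε)..ε, h (-x)) = -∫ x in (-ε)..ε, h x := by
      simp only [hoddh, intervalIntegral.integral_neg]
    have := key.symm.trans key2
    linarith
end

section
/- (Asymptotics of the desingularized symplectic volume, one-dimensional model.) For every ε with 0 < ε < 1, ∫_{ε}^{1} x^{−2k} dx + ∫_{−1}^{−ε} x^{−2k} dx + ∫_{−ε}^{ε} deriv f_ε x dx = 4·ε^{−(2k−1)} − 2/(2k−1). In particular, ε^{2k−1} times this total volume integral tends to 4 as ε → 0⁺. -/
open Filter Topology

/-- (Asymptotics of the desingularized symplectic volume,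
one-dimensional model.) For every `0 < ε < 1`,
`∫ x in ε..1, x^(-2k) + ∫ x in -1..-ε, x^(-2k) + ∫ x in -ε..ε, deriv f_ε x
  = 4 ε^(-(2k-1)) - 2/(2k-1)`,
and `ε^(2k-1)` times this total volume integral tends to `4` as `ε → 0⁺`. -/
theorem statement14 (k : ℕ) (hk : 1 ≤ k) (f : ℝ → ℝ)
    (hsmooth : ContDiff ℝ (⊤ : ℕ∞) f)
    (hodd : ∀ x : ℝ, f (-x) = -f x)
    (hderivpos : ∀ x ∈ Set.Icc (-1 : ℝ) 1, 0 < deriv f x)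
    (hplus : ∀ x : ℝ, 1 < x → f x = -1 / ((2 * (k : ℝ) - 1) * x ^ (2 * k - 1)) + 2)
    (hminus : ∀ x : ℝ, x < -1 → f x = -1 / ((2 * (k : ℝ) - 1) * x ^ (2 * k - 1)) - 2) :
    (∀ ε : ℝ, 0 < ε → ε < 1 →
      (∫ x in ε..1, 1 / x ^ (2 * k)) + (∫ x in (-1 : ℝ)..(-ε), 1 / x ^ (2 * k)) +
        (∫ x in (-ε)..ε, deriv (fun t : ℝ => f (t / ε) / ε ^ (2 * k - 1)) x) =
      4 * ε ^ (-(2 * (k : ℤ) - 1)) - 2 / (2 * (k : ℝ) - 1)) ∧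
    Tendsto
      (fun ε : ℝ => ε ^ (2 * k - 1) *
        ((∫ x in ε..1, 1 / x ^ (2 * k)) + (∫ x in (-1 : ℝ)..(-ε), 1 / x ^ (2 * k)) +
          (∫ x in (-ε)..ε, deriv (fun t : ℝ => f (t / ε) / ε ^ (2 * k - 1)) x)))
      (𝓝[>] (0 : ℝ)) (𝓝 4) := by
  have hk' : (1:ℝ) ≤ (k:ℝ) := by exact_mod_cast hk
  set c : ℝ := 2 * (k : ℝ) - 1 with hc
  have hcpos : 0 < c := by simp only [hc]; linarith
  have hcne : c ≠ 0 := ne_of_gt hcpos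
  have hodd2 : Odd (2 * k - 1) := ⟨k - 1, by omega⟩
  -- value of f at 1
  have hf1 : f 1 = -1 / c + 2 := by
    have hL : Tendsto f (𝓝[>] (1:ℝ)) (𝓝 (f 1)) :=
      (hsmooth.continuous.tendsto 1).mono_left nhdsWithin_le_nhds
    have hcont : ContinuousAt (fun x : ℝ => -1 / (c * x ^ (2 * k - 1)) + 2) 1 := by
      apply ContinuousAt.add _ continuousAt_const
      exact ContinuousAt.div continuousAt_const (by fun_prop) (by simp [hcne])
    have hR : Tendsto (fun x : ℝ => -1 / (c * x ^ (2 * k - 1)) + 2) (𝓝[>] (1:ℝ))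
        (𝓝 (-1 / (c * (1:ℝ) ^ (2 * k - 1)) + 2)) := hcont.tendsto.mono_left nhdsWithin_le_nhds
    have heq : f =ᶠ[𝓝[>] (1:ℝ)] fun x : ℝ => -1 / (c * x ^ (2 * k - 1)) + 2 := by
      filter_upwards [self_mem_nhdsWithin] with x hx
      exact hplus x hx
    have := tendsto_nhds_unique (hL.congr' heq) hR
    simpa using this
  have hfm1 : f (-1) = -(-1 / c + 2) := by rw [hodd 1, hf1]
  -- the key computation
  have key : ∀ ε : ℝ, 0 < ε → ε < 1 →
      (∫ x in ε..1, 1 / x ^ (2 * k)) + (∫ x in (-1 : ℝ)..(-ε), 1 / x ^ (2 * k)) +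
        (∫ x in (-ε)..ε, deriv (fun t : ℝ => f (t / ε) / ε ^ (2 * k - 1)) x) =
      4 * (ε ^ (2 * k - 1))⁻¹ - 2 / c := by
    intro ε hε0 hε1
    have hεne : ε ≠ 0 := ne_of_gt hε0
    have hεpow : ε ^ (2 * k - 1) ≠ 0 := pow_ne_zero _ hεne
    have e1 : ∀ x : ℝ, 1 / x ^ (2 * k) = x ^ (-((2 * k : ℕ) : ℤ)) := by
      intro x; rw [zpow_neg, zpow_natCast, one_div]
    have hne1 : -((2 * k : ℕ) : ℤ) ≠ -1 := by omega
    have h1side : (0:ℝ) ∉ Set.uIcc ε 1 := by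
      rw [Set.uIcc_of_le hε1.le]; rintro ⟨h0, _⟩; exact absurd h0 (not_le.mpr hε0)
    have h2side : (0:ℝ) ∉ Set.uIcc (-1 : ℝ) (-ε) := by
      rw [Set.uIcc_of_le (by linarith : (-1:ℝ) ≤ -ε)]
      rintro ⟨_, h0⟩; exact absurd h0 (not_le.mpr (by linarith))
    -- third integral via FTC
    have hgdiff : ∀ x : ℝ, HasDerivAt (fun t : ℝ => f (t / ε) / ε ^ (2 * k - 1))
        (deriv f (x / ε) * (1 / ε) / ε ^ (2 * k - 1)) x := by
      intro x
      have h1 : HasDerivAt (fun t : ℝ => t / ε) (1 / ε) x := by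
        simpa using (hasDerivAt_id x).div_const ε
      have h2 : HasDerivAt f (deriv f (x / ε)) (x / ε) :=
        ((hsmooth.differentiable (by simp)) (x / ε)).hasDerivAt
      exact (h2.comp x h1).div_const _
    have hderiv_eq : deriv (fun t : ℝ => f (t / ε) / ε ^ (2 * k - 1)) =
        fun x : ℝ => deriv f (x / ε) * (1 / ε) / ε ^ (2 * k - 1) :=
      funext fun x => (hgdiff x).deriv
    have hcontderiv : Continuous (fun x : ℝ => deriv f (x / ε) * (1 / ε) / ε ^ (2 * k - 1)) := by
      have hd : Continuous (deriv f) := hsmooth.continuous_deriv (by simp)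
      exact ((hd.comp (continuous_id.div_const ε)).mul continuous_const).div_const _
    have I3 : (∫ x in (-ε)..ε, deriv (fun t : ℝ => f (t / ε) / ε ^ (2 * k - 1)) x) =
        f 1 / ε ^ (2 * k - 1) - f (-1) / ε ^ (2 * k - 1) := by
      rw [intervalIntegral.integral_deriv_eq_sub
        (fun x _ => (hgdiff x).differentiableAt)
        (by rw [hderiv_eq]; exact hcontderiv.intervalIntegrable _ _)]
      rw [div_self hεne, neg_div, div_self hεne]
    simp_rw [e1]
    rw [integral_zpow (Or.inr ⟨hne1, h1side⟩), integral_zpow (Or.inr ⟨hne1, h2side⟩), I3]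
    have hz : ∀ x : ℝ, x ^ (-((2 * k : ℕ) : ℤ) + 1) = (x ^ (2 * k - 1))⁻¹ := by
      intro x
      rw [show -((2 * k : ℕ) : ℤ) + 1 = -((2 * k - 1 : ℕ) : ℤ) by omega, zpow_neg, zpow_natCast]
    simp only [hz, one_pow, inv_one, hodd2.neg_pow, inv_neg, hf1, hfm1]
    push_cast
    have hA : -(2 * (k:ℝ)) + 1 ≠ 0 := by
      intro h; rw [hc] at hcne; apply hcne; linarith
    rw [hc] at hcne ⊢
    field_simp
    ring
  constructor
  · intro ε hε0 hε1
    rw [key ε hε0 hε1]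
    congr 2
    rw [show (-(2 * (k:ℤ) - 1)) = -((2 * k - 1 : ℕ) : ℤ) by omega, zpow_neg, zpow_natCast]
  · have heq : ∀ᶠ ε in 𝓝[>] (0:ℝ), ε ^ (2 * k - 1) *
        ((∫ x in ε..1, 1 / x ^ (2 * k)) + (∫ x in (-1 : ℝ)..(-ε), 1 / x ^ (2 * k)) +
          (∫ x in (-ε)..ε, deriv (fun t : ℝ => f (t / ε) / ε ^ (2 * k - 1)) x)) =
        4 - 2 * ε ^ (2 * k - 1) / c := by
      filter_upwards [Ioo_mem_nhdsGT_of_mem (by constructor <;> norm_num :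
        (0:ℝ) ∈ Set.Ico (0:ℝ) 1)] with ε hε
      rw [key ε hε.1 hε.2]
      have hεpow : ε ^ (2 * k - 1) ≠ 0 := pow_ne_zero _ (ne_of_gt hε.1)
      field_simp
    have hT : Tendsto (fun ε : ℝ => 4 - 2 * ε ^ (2 * k - 1) / c) (𝓝[>] (0:ℝ)) (𝓝 4) := by
      have : Tendsto (fun ε : ℝ => 4 - 2 * ε ^ (2 * k - 1) / c) (𝓝 (0:ℝ))
          (𝓝 (4 - 2 * (0:ℝ) ^ (2 * k - 1) / c)) :=
        (continuous_const.sub ((continuous_const.mul (continuous_pow _)).div_const c)).tendsto 0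
      have h0 : (4 - 2 * (0:ℝ) ^ (2 * k - 1) / c) = 4 := by
        rw [zero_pow (by omega)]; ring
      rw [h0] at this
      exact this.mono_left nhdsWithin_le_nhds
    exact hT.congr' (Filter.EventuallyEq.symm heq)
end
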